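/- arXiv:math-ph/0008002 — 4 statements merged into one kernel-verified Lean document; each statement's English description precedes it below -/
import Mathlib

section
/- Let $\mu : \mathbb{R} \to [0,\infty)$ be integrable on $(-\infty, A]$ for every $A$, and let $\mu_1(\xi) := \int_{-\infty}^{\xi} \mu(s)\,ds$. Define the operator $W$ on nonnegative measurable functions by $(Wm)(\xi,\eta) := \int_{-\infty}^{\xi} ds \int_0^{\eta} dt\, \mu(s+t)\, m(s,t)$. Then for every $n \geq 1$, $(W^n 1)(\xi,\eta) \leq \frac{\eta^n}{n!} \frac{\mu_1(\xi+\eta)^n}{n!}$. -/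
/-!
By induction, `Wⁿ1(ξ, η) ≤ cₙ(η) μ₁(ξ + η)ⁿ` with `cₙ(t) = tⁿ / n!²`. Feeding this bound into `W`,
Fubini and the substitution `u = s + t` reduce the `s`-integral to
`∫_{-∞}^{ξ+t} μ μ₁ⁿ = μ₁(ξ + t)ⁿ⁺¹ / (n + 1)`, which holds because `μ₁` is absolutely continuous
with `μ₁' = μ` almost everywhere and tends to `0` at `-∞`. Bounding `μ₁(ξ + t) ≤ μ₁(ξ + η)` and
integrating `cₙ` over `[0, η]` gives the next bound.
-/

open MeasureTheory Set Filter Topology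
open scoped Nat

theorem AbsolutelyContinuousOnInterval.pow {f : ℝ → ℝ} {a b : ℝ}
    (hf : AbsolutelyContinuousOnInterval f a b) (n : ℕ) :
    AbsolutelyContinuousOnInterval (fun x => f x ^ n) a b := by
  induction n with
  | zero => simpa using (LipschitzWith.const (1 : ℝ)).lipschitzOnWith.absolutelyContinuousOnInterval
  | succ n ih => simpa only [pow_succ] using ih.fun_mul hf

section IntegralIic

variable {f : ℝ → ℝ}

theorem locallyIntegrable_of_integrableOn_Iic (hf : ∀ A, IntegrableOn f (Iic A)) :
    LocallyIntegrable f volume := by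
  refine locallyIntegrable_iff.2 fun k hk => ?_
  obtain ⟨b, hb⟩ := hk.bddAbove
  exact (hf b).mono_set fun x hx => hb hx

theorem intervalIntegrable_of_integrableOn_Iic (hf : ∀ A, IntegrableOn f (Iic A)) {a b : ℝ} :
    IntervalIntegrable f volume a b :=
  ((locallyIntegrable_of_integrableOn_Iic hf).integrableOn_isCompact isCompact_uIcc)
    |>.intervalIntegrable

theorem integral_Iic_eq_add_intervalIntegral (hf : ∀ A, IntegrableOn f (Iic A)) (a x : ℝ) :
    ∫ s in Iic x, f s = (∫ s in Iic a, f s) + ∫ s in a..x, f s :=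
  eq_add_of_sub_eq' (intervalIntegral.integral_Iic_sub_Iic (hf a) (hf x))

theorem continuous_integral_Iic (hf : ∀ A, IntegrableOn f (Iic A)) :
    Continuous fun x => ∫ s in Iic x, f s := by
  rw [funext (integral_Iic_eq_add_intervalIntegral hf 0)]
  exact continuous_const.add <| intervalIntegral.continuous_primitive
    (fun _ _ => intervalIntegrable_of_integrableOn_Iic hf) 0

theorem ae_hasDerivAt_integral_Iic (hf : ∀ A, IntegrableOn f (Iic A)) :
    ∀ᵐ x, HasDerivAt (fun x => ∫ s in Iic x, f s) (f x) x := by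
  filter_upwards [LocallyIntegrable.ae_hasDerivAt_integral
    (locallyIntegrable_of_integrableOn_Iic hf)] with x hx
  rw [funext (integral_Iic_eq_add_intervalIntegral hf 0)]
  exact (hx 0).const_add (∫ s in Iic 0, f s)

theorem absolutelyContinuousOnInterval_integral_Iic (hf : ∀ A, IntegrableOn f (Iic A)) (a b : ℝ) :
    AbsolutelyContinuousOnInterval (fun x => ∫ s in Iic x, f s) a b := by
  rw [funext (integral_Iic_eq_add_intervalIntegral hf a)]
  exact (LipschitzWith.const _).lipschitzOnWith.absolutelyContinuousOnInterval.add
    ((intervalIntegrable_of_integrableOn_Iic hf).absolutelyContinuousOnInterval_intervalIntegral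
      left_mem_uIcc)

theorem tendsto_integral_Iic_atBot (hf : ∀ A, IntegrableOn f (Iic A)) :
    Tendsto (fun x => ∫ s in Iic x, f s) atBot (𝓝 0) := by
  have h := (intervalIntegral_tendsto_integral_Iic 0 (hf 0) tendsto_id).const_sub
    (∫ s in Iic 0, f s)
  rw [sub_self] at h
  refine h.congr fun x => ?_
  rw [integral_Iic_eq_add_intervalIntegral hf x 0, id]
  ring

theorem norm_integral_Iic_le (hf : ∀ A, IntegrableOn f (Iic A)) {x b : ℝ} (hxb : x ≤ b) :
    ‖∫ s in Iic x, f s‖ ≤ ∫ s in Iic b, ‖f s‖ :=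
  (norm_integral_le_integral_norm _).trans <| setIntegral_mono_set (hf b).norm
    (.of_forall fun _ => norm_nonneg _) (Iic_subset_Iic.2 hxb).eventuallyLE

theorem integrableOn_mul_pow_integral_Iic (hf : ∀ A, IntegrableOn f (Iic A)) (n : ℕ) (b : ℝ) :
    IntegrableOn (fun x => f x * (∫ s in Iic x, f s) ^ n) (Iic b) := by
  refine (hf b).mul_bdd ((continuous_integral_Iic hf).pow n).aestronglyMeasurable
    (c := (∫ s in Iic b, ‖f s‖) ^ n) ?_
  filter_upwards [ae_restrict_mem measurableSet_Iic] with x hx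
  rw [norm_pow]
  exact pow_le_pow_left₀ (norm_nonneg _) (norm_integral_Iic_le hf hx) n

theorem intervalIntegral_mul_pow_integral_Iic (hf : ∀ A, IntegrableOn f (Iic A)) (n : ℕ) (a b : ℝ) :
    ∫ x in a..b, f x * (∫ s in Iic x, f s) ^ n
      = ((∫ s in Iic b, f s) ^ (n + 1) - (∫ s in Iic a, f s) ^ (n + 1)) / (n + 1) := by
  have hderiv : ∀ᵐ x, HasDerivAt (fun x => (∫ s in Iic x, f s) ^ (n + 1))
      ((n + 1) * (f x * (∫ s in Iic x, f s) ^ n)) x := by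
    filter_upwards [ae_hasDerivAt_integral_Iic hf] with x hx
    refine (hx.pow (n + 1)).congr_deriv ?_
    simp only [Nat.cast_add, Nat.cast_one, Nat.add_sub_cancel]
    ring
  rw [← ((absolutelyContinuousOnInterval_integral_Iic hf a b).pow (n + 1)).integral_deriv_eq_sub,
    intervalIntegral.integral_congr_ae (hderiv.mono fun x hx _ => hx.deriv),
    intervalIntegral.integral_const_mul, mul_div_cancel_left₀ _ (by positivity)]

theorem integral_Iic_mul_pow_integral_Iic (hf : ∀ A, IntegrableOn f (Iic A)) (n : ℕ) (b : ℝ) :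
    ∫ x in Iic b, f x * (∫ s in Iic x, f s) ^ n = (∫ s in Iic b, f s) ^ (n + 1) / (n + 1) := by
  have hlim := intervalIntegral_tendsto_integral_Iic b
    (integrableOn_mul_pow_integral_Iic hf n b) tendsto_id
  simp_rw [id, intervalIntegral_mul_pow_integral_Iic hf] at hlim
  refine tendsto_nhds_unique hlim ?_
  simpa using (((tendsto_integral_Iic_atBot hf).pow (n + 1)).const_sub
    ((∫ s in Iic b, f s) ^ (n + 1))).div_const ((n : ℝ) + 1)

end IntegralIic

theorem setIntegral_Iic_comp_add_right (g : ℝ → ℝ) (ξ t : ℝ) :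
    ∫ s in Iic ξ, g (s + t) = ∫ u in Iic (ξ + t), g u := by
  simpa using (measurePreserving_add_right volume t).setIntegral_preimage_emb
    (measurableEmbedding_addRight t) g (Iic (ξ + t))

theorem integrableOn_Iic_comp_add_right {g : ℝ → ℝ} {ξ t : ℝ}
    (hg : IntegrableOn g (Iic (ξ + t))) : IntegrableOn (fun s => g (s + t)) (Iic ξ) := by
  simpa [Function.comp_def] using
    ((measurePreserving_add_right volume t).integrableOn_comp_preimage
      (measurableEmbedding_addRight t)).2 hg

section ShiftedProduct

variable {h c : ℝ → ℝ}

theorem integrable_mul_comp_add_prod (hh : ∀ A, IntegrableOn h (Iic A)) (hc : Continuous c)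
    (ξ η : ℝ) : Integrable (fun p : ℝ × ℝ => c p.2 * h (p.1 + p.2))
      ((volume.restrict (Iic ξ)).prod (volume.restrict (Ioc 0 η))) := by
  have hadd : Measure.QuasiMeasurePreserving (fun p : ℝ × ℝ => p.1 + p.2)
      (volume.prod volume) volume :=
    Measure.quasiMeasurePreserving_snd.comp
      (measurePreserving_prod_add volume volume).quasiMeasurePreserving
  have hle : (volume.restrict (Iic ξ)).prod (volume.restrict (Ioc 0 η)) ≤ volume.prod volume := by
    rw [Measure.prod_restrict]
    exact Measure.restrict_le_self
  have hmeas : AEStronglyMeasurable (fun p : ℝ × ℝ => c p.2 * h (p.1 + p.2))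
      ((volume.restrict (Iic ξ)).prod (volume.restrict (Ioc 0 η))) :=
    ((hc.comp continuous_snd).aestronglyMeasurable.mul
      ((locallyIntegrable_of_integrableOn_Iic hh).aestronglyMeasurable.comp_quasiMeasurePreserving
        hadd)).mono_measure hle
  refine (integrable_prod_iff' hmeas).2 ⟨.of_forall fun t =>
    (integrableOn_Iic_comp_add_right (hh (ξ + t))).const_mul (c t), ?_⟩
  have hmarginal : (fun t => ∫ s in Iic ξ, ‖c t * h (s + t)‖)
      = fun t => ‖c t‖ * ∫ u in Iic (ξ + t), ‖h u‖ := by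
    ext t
    simp_rw [norm_mul]
    rw [integral_const_mul, setIntegral_Iic_comp_add_right (fun u => ‖h u‖)]
  rw [hmarginal]
  exact (hc.norm.mul ((continuous_integral_Iic fun A => (hh A).norm).comp
    (continuous_const_add ξ))).integrableOn_Ioc

theorem integral_Iic_intervalIntegral_mul_comp_add (hh : ∀ A, IntegrableOn h (Iic A))
    (hc : Continuous c) {ξ η : ℝ} (hη : 0 ≤ η) :
    ∫ s in Iic ξ, ∫ t in 0..η, c t * h (s + t) = ∫ t in 0..η, c t * ∫ u in Iic (ξ + t), h u := by
  simp_rw [intervalIntegral.integral_of_le hη]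
  rw [integral_integral_swap (integrable_mul_comp_add_prod hh hc ξ η)]
  congr 1
  ext t
  rw [integral_const_mul, setIntegral_Iic_comp_add_right h]

theorem integral_Iic_intervalIntegral_le (hh : ∀ A, IntegrableOn h (Iic A)) (hc : Continuous c)
    {ξ η : ℝ} (hη : 0 ≤ η) {g : ℝ → ℝ → ℝ} (hg0 : ∀ s, ∀ t ∈ Ioc 0 η, 0 ≤ g s t)
    (hg : ∀ s, ∀ t ∈ Ioc 0 η, g s t ≤ c t * h (s + t)) :
    ∫ s in Iic ξ, ∫ t in 0..η, g s t ≤ ∫ t in 0..η, c t * ∫ u in Iic (ξ + t), h u := by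
  rw [← integral_Iic_intervalIntegral_mul_comp_add hh hc hη]
  have hint := integrable_mul_comp_add_prod hh hc ξ η
  simp_rw [intervalIntegral.integral_of_le hη]
  refine integral_mono_of_nonneg (.of_forall fun s =>
    setIntegral_nonneg measurableSet_Ioc (hg0 s)) hint.integral_prod_left ?_
  filter_upwards [hint.prod_right_ae] with s hs
  refine integral_mono_of_nonneg ?_ hs ?_ <;>
    filter_upwards [ae_restrict_mem measurableSet_Ioc] with t ht
  exacts [hg0 s t ht, hg s t ht]

end ShiftedProduct

section Volterra

variable {μ : ℝ → ℝ}

theorem monotone_integral_Iic (hμ : ∀ x, 0 ≤ μ x) (hint : ∀ A, IntegrableOn μ (Iic A)) :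
    Monotone fun x => ∫ u in Iic x, μ u := fun _ b hab =>
  setIntegral_mono_set (hint b) (.of_forall hμ) (Iic_subset_Iic.2 hab).eventuallyLE

noncomputable def volterra (μ : ℝ → ℝ) (m : ℝ → ℝ → ℝ) (ξ η : ℝ) : ℝ :=
  ∫ s in Iic ξ, ∫ t in (0 : ℝ)..η, μ (s + t) * m s t

theorem volterra_nonneg (hμ : ∀ x, 0 ≤ μ x) {m : ℝ → ℝ → ℝ} (hm : ∀ s t, 0 ≤ t → 0 ≤ m s t)
    {ξ η : ℝ} (hη : 0 ≤ η) : 0 ≤ volterra μ m ξ η :=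
  setIntegral_nonneg measurableSet_Iic fun s _ =>
    intervalIntegral.integral_nonneg hη fun t ht => mul_nonneg (hμ _) (hm s t ht.1)

theorem volterra_le_of_le_mul_pow (hμ : ∀ x, 0 ≤ μ x) (hint : ∀ A, IntegrableOn μ (Iic A))
    {c : ℝ → ℝ} (hc : Continuous c) (hc0 : ∀ t, 0 ≤ t → 0 ≤ c t) {m : ℝ → ℝ → ℝ} {n : ℕ}
    (hm0 : ∀ s t, 0 ≤ t → 0 ≤ m s t)
    (hm : ∀ s t, 0 ≤ t → m s t ≤ c t * (∫ u in Iic (s + t), μ u) ^ n) {ξ η : ℝ} (hη : 0 ≤ η) :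
    volterra μ m ξ η ≤ (∫ t in 0..η, c t) * (∫ u in Iic (ξ + η), μ u) ^ (n + 1) / (n + 1) := by
  have hF : Continuous fun t => c t * ((∫ u in Iic (ξ + t), μ u) ^ (n + 1) / (n + 1)) := by
    have hμ1 := (continuous_integral_Iic hint).comp (continuous_const_add ξ)
    fun_prop
  calc volterra μ m ξ η
      ≤ ∫ t in 0..η, c t * ∫ u in Iic (ξ + t), μ u * (∫ v in Iic u, μ v) ^ n := by
        refine integral_Iic_intervalIntegral_le (integrableOn_mul_pow_integral_Iic hint n) hc hη
          (fun s t ht => mul_nonneg (hμ _) (hm0 s t ht.1.le)) fun s t ht => ?_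
        calc μ (s + t) * m s t ≤ μ (s + t) * (c t * (∫ u in Iic (s + t), μ u) ^ n) :=
              mul_le_mul_of_nonneg_left (hm s t ht.1.le) (hμ _)
          _ = c t * (μ (s + t) * (∫ u in Iic (s + t), μ u) ^ n) := by ring
    _ = ∫ t in 0..η, c t * ((∫ u in Iic (ξ + t), μ u) ^ (n + 1) / (n + 1)) := by
        simp_rw [integral_Iic_mul_pow_integral_Iic hint]
    _ ≤ ∫ t in 0..η, c t * ((∫ u in Iic (ξ + η), μ u) ^ (n + 1) / (n + 1)) := by
        refine intervalIntegral.integral_mono_on hη (hF.intervalIntegrable _ _)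
          ((hc.mul continuous_const).intervalIntegrable _ _)
          fun t ht => mul_le_mul_of_nonneg_left ?_ (hc0 t ht.1)
        exact div_le_div_of_nonneg_right (pow_le_pow_left₀
          (setIntegral_nonneg measurableSet_Iic fun u _ => hμ u)
          (monotone_integral_Iic hμ hint (by linarith [ht.2])) _) (by positivity)
    _ = _ := by rw [intervalIntegral.integral_mul_const]; ring

theorem iterate_volterra_one_le (hμ : ∀ x, 0 ≤ μ x) (hint : ∀ A, IntegrableOn μ (Iic A))
    (n : ℕ) {ξ η : ℝ} (hη : 0 ≤ η) :
    0 ≤ (volterra μ)^[n] (fun _ _ => 1) ξ η ∧ (volterra μ)^[n] (fun _ _ => 1) ξ η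
      ≤ η ^ n / n ! * (∫ u in Iic (ξ + η), μ u) ^ n / n ! := by
  induction n generalizing ξ η with
  | zero => simp
  | succ n ih =>
    rw [Function.iterate_succ_apply']
    refine ⟨volterra_nonneg hμ (fun s t ht => (ih ht).1) hη, ?_⟩
    refine (volterra_le_of_le_mul_pow hμ hint (c := fun t => t ^ n / n ! / n !) (by fun_prop)
      (fun t _ => by positivity) (fun s t ht => (ih ht).1)
      (fun s t ht => (ih ht).2.trans_eq (by ring)) hη).trans_eq ?_
    simp only [intervalIntegral.integral_div, integral_pow, Nat.factorial_succ]
    push_cast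
    field_simp
    ring

end Volterra

/-- Iterated bound for the Volterra-type operator
`(Wm)(ξ,η) = ∫_{-∞}^{ξ} ds ∫_0^η dt μ(s+t) m(s,t)`:
for all `n ≥ 1`, `(Wⁿ1)(ξ,η) ≤ (ηⁿ/n!) (μ₁(ξ+η)ⁿ/n!)` where `μ₁(ξ) = ∫_{-∞}^ξ μ`. -/
theorem stmt_6 (μ : ℝ → ℝ) (hμ : ∀ x, 0 ≤ μ x)
    (hint : ∀ A : ℝ, IntegrableOn μ (Set.Iic A))
    (μ1 : ℝ → ℝ) (hμ1 : ∀ ξ, μ1 ξ = ∫ s in Set.Iic ξ, μ s)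
    (W : (ℝ → ℝ → ℝ) → (ℝ → ℝ → ℝ))
    (hW : ∀ m ξ η, W m ξ η = ∫ s in Set.Iic ξ, ∫ t in (0 : ℝ)..η, μ (s + t) * m s t) :
    ∀ n : ℕ, 1 ≤ n → ∀ ξ η : ℝ, 0 ≤ η →
      (W^[n] (fun _ _ => 1)) ξ η
        ≤ η ^ n / (Nat.factorial n) * (μ1 (ξ + η)) ^ n / (Nat.factorial n) := by
  intro n _ ξ η hη
  obtain rfl : μ1 = fun ξ => ∫ s in Iic ξ, μ s := funext hμ1
  obtain rfl : W = volterra μ := funext fun m => funext fun ξ => funext (hW m ξ)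
  exact (iterate_volterra_one_le hμ hint n hη).2
end

section
/- Let $V$ and $W$ be Volterra integral operators on $L^2(0,b)$ of the form $(Vf)(x) = \int_0^x V(x,y)f(y)\,dy$ with continuous kernels, and let $U$ be a unitary operator on $L^2(0,b)$. If $I + V^* = U(I + W^*)$, then $V = W$. -/
/-!
Put `T = (1 + W₁)(V - W)`. Taking adjoints in `I + V* = U (I + W*)` and using `U* U = I` gives
`(1 + V)(1 + V)* = (1 + W)(1 + W)*`, which rearranges to `T = -((1 + V₁)(V - W))*`. So `T` is a
Volterra operator, hence lower triangular, and the adjoint of one, hence upper triangular.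
Pairing `T` with indicators of `(α, β]` and `(γ, δ]`, `β ≤ γ`, shows that `T 𝟙_(α, β]` vanishes on
`[β, b]`. There `A = (V - W) 𝟙_(α, β]` solves the homogeneous Volterra equation `A + W₁ A = 0`, so
by Grönwall `A` is bounded on `[β, b]` by a multiple of its mass on `[α, β]`, which is
`O((β - α)²)`. For `x ≥ β`, `A x = ∫_α^β (V - W)(x, y) dy`, and a continuous function all of whose
interval integrals are `O(length²)` vanishes.
-/

open MeasureTheory Set Filter Asymptotics Real Interval
open scoped RealInnerProductSpace

theorem mul_sub_eq_neg_star_mul_sub {R : Type*} [Ring R] [StarRing R] {p q p₁ q₁ u : R}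
    (h : star p = u * star q) (hu : star u * u = 1) (hp : p₁ * p = 1) (hq : q₁ * q = 1) :
    q₁ * (p - q) = -star (p₁ * (p - q)) := by
  have hp' : p = q * star u := by simpa using congr_arg star h
  have hpp : p * star p = q * star q := by
    rw [h, hp', mul_assoc, ← mul_assoc (star u), hu, one_mul]
  have hp₁ : star p * star p₁ = 1 := by rw [← star_mul, hp, star_one]
  calc q₁ * (p - q) = q₁ * (p - q) * (star p * star p₁) := by rw [hp₁, mul_one]
    _ = q₁ * (p * star p) * star p₁ - q₁ * q * (star p * star p₁) := by noncomm_ring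
    _ = star q * star p₁ - star p * star p₁ := by
      rw [hpp, ← mul_assoc, hq, one_mul, one_mul]
    _ = -star (p₁ * (p - q)) := by rw [star_mul, star_sub]; noncomm_ring

theorem eqOn_zero_of_abs_intervalIntegral_le_sq {f : ℝ → ℝ} (hf : Continuous f) {a b C : ℝ}
    (hab : a < b) (h : ∀ s t, a ≤ s → s ≤ t → t ≤ b → |∫ y in s..t, f y| ≤ C * (t - s) ^ 2) :
    EqOn f 0 (Icc a b) := by
  have hopen : EqOn f 0 (Ioo a b) := by
    intro x hx
    have hG : HasDerivAt (fun s => ∫ y in a..s, f y) (f x) x :=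
      intervalIntegral.integral_hasDerivAt_right (hf.intervalIntegrable _ _)
        hf.aestronglyMeasurable.stronglyMeasurableAtFilter hf.continuousAt
    have hG0 : HasDerivAt (fun s => ∫ y in a..s, f y) 0 x := by
      rw [hasDerivAt_iff_isLittleO]
      refine IsBigO.trans_isLittleO ?_ (isLittleO_pow_sub_sub x one_lt_two)
      refine IsBigO.of_bound C ?_
      filter_upwards [Ioo_mem_nhds hx.1 hx.2] with s hs
      rw [intervalIntegral.integral_interval_sub_left (hf.intervalIntegrable _ _)
        (hf.intervalIntegrable _ _), smul_zero, sub_zero, norm_pow, norm_norm, Real.norm_eq_abs,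
        Real.norm_eq_abs, sq_abs]
      rcases le_total x s with hxs | hsx
      · exact h x s hx.1.le hxs hs.2.le
      · rw [intervalIntegral.integral_symm, abs_neg, ← neg_sub, neg_sq]
        exact h s x hs.1.le hsx hx.2.le
    exact hG.unique hG0
  rw [← closure_Ioo hab.ne]
  exact hopen.closure hf continuous_const

theorem exists_pos_bound_of_continuous {K : ℝ → ℝ → ℝ} (hK : Continuous (Function.uncurry K))
    (b : ℝ) : ∃ M, 0 < M ∧ ∀ x ∈ Icc 0 b, ∀ y ∈ Icc 0 b, |K x y| ≤ M := by
  obtain ⟨M, hM⟩ := (isCompact_Icc.prod isCompact_Icc).exists_bound_of_continuousOn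
    (s := Icc (0 : ℝ) b ×ˢ Icc (0 : ℝ) b) hK.continuousOn
  exact ⟨max M 1, by positivity, fun x hx y hy => (hM (x, y) ⟨hx, hy⟩).trans (le_max_left _ _)⟩

noncomputable def volterraIntegral (K : ℝ → ℝ → ℝ) (f : ℝ → ℝ) (x : ℝ) : ℝ :=
  ∫ y in Ioc 0 x, K x y * f y

namespace volterraIntegral
variable {K : ℝ → ℝ → ℝ} {f g : ℝ → ℝ}

theorem congr_ae {b x : ℝ} (h : f =ᵐ[volume.restrict (Ioc 0 b)] g) (hx : x ≤ b) :
    volterraIntegral K f x = volterraIntegral K g x := by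
  refine integral_congr_ae ?_
  filter_upwards [ae_restrict_of_ae_restrict_of_subset (Ioc_subset_Ioc_right hx) h] with y hy
  rw [hy]

theorem indicator_one {α β : ℝ} (hα : 0 ≤ α) (K : ℝ → ℝ → ℝ) (x : ℝ) :
    volterraIntegral K ((Ioc α β).indicator 1) x = ∫ y in α..max α (min β x), K x y := by
  have : (fun y => K x y * (Ioc α β).indicator 1 y) = (Ioc α β).indicator (K x) := by
    ext y; by_cases hy : y ∈ Ioc α β <;> simp [hy]
  rw [volterraIntegral, this, integral_indicator measurableSet_Ioc,
    Measure.restrict_restrict measurableSet_Ioc, Ioc_inter_Ioc, max_eq_left hα,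
    intervalIntegral.integral_of_le (le_max_left _ _)]
  rcases le_total α (min β x) with h | h
  · rw [max_eq_right h]
  · rw [max_eq_left h, Ioc_self, Ioc_eq_empty h.not_gt]

theorem eq_zero_of_forall_eq_zero {x : ℝ} (h : ∀ y ∈ Ioc 0 x, f y = 0) :
    volterraIntegral K f x = 0 :=
  setIntegral_eq_zero_of_forall_eq_zero fun y hy => by rw [h y hy, mul_zero]

theorem eq_intervalIntegral (K : ℝ → ℝ → ℝ) (f : ℝ → ℝ) (x : ℝ) :
    volterraIntegral K f x = ∫ y in 0..max 0 x, K x y * f y := by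
  rw [intervalIntegral.integral_of_le (le_max_left 0 x), volterraIntegral]
  rcases le_total 0 x with hx | hx
  · rw [max_eq_right hx]
  · rw [max_eq_left hx, Ioc_self, Ioc_eq_empty hx.not_gt]

theorem continuous (hK : Continuous (Function.uncurry K)) (hf : Continuous f) :
    Continuous (volterraIntegral K f) := by
  simp_rw [funext (eq_intervalIntegral K f)]
  exact intervalIntegral.continuous_parametric_intervalIntegral_of_continuous
    (hK.mul (hf.comp continuous_snd)) (continuous_const.max continuous_id)

theorem abs_le {x M : ℝ} (hf : Continuous f) (hx : 0 ≤ x) (hKM : ∀ y ∈ Icc 0 x, |K x y| ≤ M) :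
    |volterraIntegral K f x| ≤ M * ∫ y in 0..x, |f y| := by
  rw [eq_intervalIntegral, max_eq_right hx, ← intervalIntegral.integral_const_mul,
    ← Real.norm_eq_abs]
  refine intervalIntegral.norm_integral_le_of_norm_le hx
    (Eventually.of_forall fun y hy => ?_) (hf.abs.intervalIntegrable 0 x |>.const_mul M)
  rw [norm_mul, Real.norm_eq_abs, Real.norm_eq_abs]
  exact mul_le_mul_of_nonneg_right (hKM y ⟨hy.1.le, hy.2⟩) (abs_nonneg _)

variable {α β : ℝ}

theorem indicator_one_eq_zero_of_le {x : ℝ} (hx : x ≤ α) :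
    volterraIntegral K ((Ioc α β).indicator 1) x = 0 :=
  eq_zero_of_forall_eq_zero fun _ hy =>
    indicator_of_notMem (fun h => (h.1.trans_le (hy.2.trans hx)).false) _

theorem continuous_indicator_one (hK : Continuous (Function.uncurry K)) (hα : 0 ≤ α) :
    Continuous (volterraIntegral K ((Ioc α β).indicator 1)) := by
  simp_rw [funext (indicator_one hα K)]
  exact intervalIntegral.continuous_parametric_intervalIntegral_of_continuous hK
    (continuous_const.max (continuous_const.min continuous_id))

theorem indicator_one_of_le {x : ℝ} (hα : 0 ≤ α) (hαβ : α ≤ β) (hβx : β ≤ x) :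
    volterraIntegral K ((Ioc α β).indicator 1) x = ∫ y in α..β, K x y := by
  rw [indicator_one hα, min_eq_left hβx, max_eq_right hαβ]

theorem abs_indicator_one_le {x M : ℝ} (hα : 0 ≤ α) (hαβ : α ≤ β) (hM : 0 ≤ M)
    (hKM : ∀ y ∈ Ioc α β, |K x y| ≤ M) :
    |volterraIntegral K ((Ioc α β).indicator 1) x| ≤ M * (β - α) := by
  rw [indicator_one hα]
  set m := max α (min β x)
  have hm : m ∈ Icc α β := ⟨le_max_left _ _, max_le hαβ (min_le_left _ _)⟩
  have hKM' : ∀ y ∈ Ι α m, ‖K x y‖ ≤ M := fun y hy => by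
    rw [uIoc_of_le hm.1] at hy
    exact hKM y ⟨hy.1, hy.2.trans hm.2⟩
  calc |∫ y in α..m, K x y| ≤ M * |m - α| :=
        intervalIntegral.norm_integral_le_of_norm_le_const hKM'
    _ ≤ M * (β - α) := by
        rw [abs_of_nonneg (sub_nonneg.2 hm.1)]
        exact mul_le_mul_of_nonneg_left (by linarith [hm.2]) hM

theorem integral_abs_indicator_one_le {M : ℝ} (hK : Continuous (Function.uncurry K))
    (hα : 0 ≤ α) (hαβ : α ≤ β) (hM : 0 ≤ M) (hKM : ∀ x ∈ Icc α β, ∀ y ∈ Ioc α β, |K x y| ≤ M) :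
    ∫ x in 0..β, |volterraIntegral K ((Ioc α β).indicator 1) x| ≤ M * (β - α) ^ 2 := by
  have hint : ∀ u v, IntervalIntegrable
      (fun x => |volterraIntegral K ((Ioc α β).indicator 1) x|) volume u v :=
    fun u v => (continuous_indicator_one hK hα).abs.intervalIntegrable u v
  have hzero : ∫ x in 0..α, |volterraIntegral K ((Ioc α β).indicator 1) x| = 0 := by
    refine (intervalIntegral.integral_congr (g := fun _ => 0) fun x hx => ?_).trans
      intervalIntegral.integral_zero
    rw [uIcc_of_le hα] at hx
    simp [indicator_one_eq_zero_of_le hx.2]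
  have hmain : ∫ x in α..β, |volterraIntegral K ((Ioc α β).indicator 1) x| ≤
      ∫ _ in α..β, M * (β - α) :=
    intervalIntegral.integral_mono_on hαβ (hint α β) intervalIntegrable_const fun x hx =>
      abs_indicator_one_le hα hαβ hM (hKM x hx)
  rw [← intervalIntegral.integral_add_adjacent_intervals (hint 0 α) (hint α β), hzero, zero_add]
  rw [intervalIntegral.integral_const, smul_eq_mul] at hmain
  nlinarith

end volterraIntegral

theorem abs_le_of_add_volterraIntegral_eq_zero {K : ℝ → ℝ → ℝ} {A : ℝ → ℝ} {M β b : ℝ}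
    (hA : Continuous A) (hM : 0 < M) (hKM : ∀ t ∈ Icc β b, ∀ s ∈ Icc 0 t, |K t s| ≤ M)
    (hβ : 0 ≤ β) (h : ∀ t ∈ Icc β b, A t + volterraIntegral K A t = 0) :
    ∀ x ∈ Icc β b, |A x| ≤ M * (∫ s in 0..β, |A s|) * exp (M * (x - β)) := by
  set ε := M * ∫ s in 0..β, |A s|
  set B : ℝ → ℝ := fun t => ∫ s in β..t, |A s|
  have hAi : ∀ u v, IntervalIntegrable (fun s => |A s|) volume u v :=
    fun u v => hA.abs.intervalIntegrable u v
  have hB_nonneg : ∀ t, β ≤ t → 0 ≤ B t :=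
    fun t ht => intervalIntegral.integral_nonneg ht fun _ _ => abs_nonneg _
  have hpoint : ∀ t ∈ Icc β b, |A t| ≤ ε + M * B t := by
    intro t ht
    calc |A t| = |volterraIntegral K A t| := by rw [eq_neg_of_add_eq_zero_left (h t ht), abs_neg]
      _ ≤ M * ∫ s in 0..t, |A s| :=
          volterraIntegral.abs_le hA (hβ.trans ht.1) fun s hs => hKM t ht s hs
      _ = ε + M * B t := by
          rw [← intervalIntegral.integral_add_adjacent_intervals (hAi 0 β) (hAi β t), mul_add]
  have hgronwall : ∀ t ∈ Icc β b, ‖B t‖ ≤ gronwallBound 0 M ε (t - β) := by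
    refine norm_le_gronwallBound_of_norm_deriv_right_le (f' := fun t => |A t|) ?_ ?_ ?_ ?_
    · exact (intervalIntegral.continuous_primitive (fun _ _ => hAi _ _) β).continuousOn
    · exact fun t _ => (intervalIntegral.integral_hasDerivAt_right (hAi _ _)
        hA.abs.aestronglyMeasurable.stronglyMeasurableAtFilter
        hA.abs.continuousAt).hasDerivWithinAt
    · simp [B]
    · intro t ht
      rw [Real.norm_eq_abs, abs_abs, Real.norm_eq_abs, abs_of_nonneg (hB_nonneg t ht.1)]
      linarith [hpoint t (Ico_subset_Icc_self ht)]
  intro x hx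
  have hBx := hgronwall x hx
  rw [Real.norm_eq_abs, abs_of_nonneg (hB_nonneg x hx.1), gronwallBound_of_K_ne_0 hM.ne'] at hBx
  calc |A x| ≤ ε + M * B x := hpoint x hx
    _ ≤ ε + M * (0 * exp (M * (x - β)) + ε / M * (exp (M * (x - β)) - 1)) := by gcongr
    _ = ε * exp (M * (x - β)) := by field_simp; ring

theorem abs_intervalIntegral_le_sq_of_setIntegral_eq_zero {D K₁ : ℝ → ℝ → ℝ} {b : ℝ}
    (hD : Continuous (Function.uncurry D)) (hK₁ : Continuous (Function.uncurry K₁))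
    (hH : ∀ α β γ δ, 0 ≤ α → α ≤ β → β ≤ γ → γ ≤ δ → δ ≤ b →
      ∫ x in Ioc γ δ, (volterraIntegral D ((Ioc α β).indicator 1) +
        volterraIntegral K₁ (volterraIntegral D ((Ioc α β).indicator 1))) x = 0) :
    ∃ C, ∀ α β x, 0 ≤ α → α ≤ β → β ≤ x → x < b → |∫ y in α..β, D x y| ≤ C * (β - α) ^ 2 := by
  obtain ⟨M, hM, hK₁M⟩ := exists_pos_bound_of_continuous hK₁ b
  obtain ⟨N, hN, hDN⟩ := exists_pos_bound_of_continuous hD b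
  refine ⟨M * N * exp (M * b), fun α β x hα hαβ hβx hxb => ?_⟩
  set A := volterraIntegral D ((Ioc α β).indicator 1)
  have hβ : 0 ≤ β := hα.trans hαβ
  have hA : Continuous A := volterraIntegral.continuous_indicator_one hD hα
  have hmass : ∫ s in 0..β, |A s| ≤ N * (β - α) ^ 2 :=
    volterraIntegral.integral_abs_indicator_one_le hD hα hαβ hN.le fun t ht y hy =>
      hDN t ⟨hα.trans ht.1, ht.2.trans (hβx.trans hxb.le)⟩ y
        ⟨hα.trans hy.1.le, hy.2.trans (hβx.trans hxb.le)⟩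
  have hH0 : ∀ t ∈ Icc β b, A t + volterraIntegral K₁ A t = 0 := fun t ht =>
    eqOn_zero_of_abs_intervalIntegral_le_sq (hA.add (volterraIntegral.continuous hK₁ hA))
      (hβx.trans_lt hxb) (C := 0) (fun s u hs hsu hub => by
        rw [intervalIntegral.integral_of_le hsu, hH α β s u hα hαβ hs hsu hub, abs_zero, zero_mul])
      ht
  have hAx := abs_le_of_add_volterraIntegral_eq_zero hA hM
    (fun t ht s hs => hK₁M t ⟨hβ.trans ht.1, ht.2⟩ s ⟨hs.1, hs.2.trans ht.2⟩) hβ hH0 x ⟨hβx, hxb.le⟩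
  calc |∫ y in α..β, D x y| = |A x| := by
          rw [← volterraIntegral.indicator_one_of_le hα hαβ hβx]
    _ ≤ M * (∫ s in 0..β, |A s|) * exp (M * (x - β)) := hAx
    _ ≤ M * (N * (β - α) ^ 2) * exp (M * b) := by gcongr; linarith
    _ = M * N * exp (M * b) * (β - α) ^ 2 := by ring

noncomputable def intervalIndicator (b α β : ℝ) : Lp ℝ 2 (volume.restrict (Ioc (0 : ℝ) b)) :=
  indicatorConstLp 2 (measurableSet_Ioc (a := α) (b := β))
    ((Measure.restrict_apply_le _ _).trans_lt measure_Ioc_lt_top).ne (1 : ℝ)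

section L2

variable {b : ℝ}

theorem coeFn_intervalIndicator (α β : ℝ) :
    ⇑(intervalIndicator b α β) =ᵐ[volume.restrict (Ioc 0 b)] (Ioc α β).indicator 1 :=
  indicatorConstLp_coeFn

theorem inner_intervalIndicator {α β : ℝ} (hα : 0 ≤ α) (hβ : β ≤ b)
    {g : Lp ℝ 2 (volume.restrict (Ioc 0 b))} {φ : ℝ → ℝ}
    (hg : ⇑g =ᵐ[volume.restrict (Ioc 0 b)] φ) :
    ⟪intervalIndicator b α β, g⟫ = ∫ x in Ioc α β, φ x := by
  rw [intervalIndicator, L2.inner_indicatorConstLp_one, Measure.restrict_restrict measurableSet_Ioc,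
    Ioc_inter_Ioc, max_eq_left hα, min_eq_left hβ]
  exact integral_congr_ae (ae_restrict_of_ae_restrict_of_subset (Ioc_subset_Ioc hα hβ) hg)

def HasVolterraKernel
    (T : Lp ℝ 2 (volume.restrict (Ioc (0 : ℝ) b)) →L[ℝ] Lp ℝ 2 (volume.restrict (Ioc 0 b)))
    (K : ℝ → ℝ → ℝ) : Prop :=
  ∀ f, ⇑(T f) =ᵐ[volume.restrict (Ioc 0 b)] volterraIntegral K f

variable {T T₁ TV TW TV₁ TW₁ :
    Lp ℝ 2 (volume.restrict (Ioc (0 : ℝ) b)) →L[ℝ] Lp ℝ 2 (volume.restrict (Ioc 0 b))}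
  {K K₁ Vk Wk V₁k W₁k : ℝ → ℝ → ℝ}

theorem apply_ae_eq_volterraIntegral (hT : HasVolterraKernel T K)
    {f : Lp ℝ 2 (volume.restrict (Ioc 0 b))} {φ : ℝ → ℝ}
    (hf : ⇑f =ᵐ[volume.restrict (Ioc 0 b)] φ) :
    ⇑(T f) =ᵐ[volume.restrict (Ioc 0 b)] volterraIntegral K φ := by
  filter_upwards [hT f, ae_restrict_mem measurableSet_Ioc] with x hx hxb
  rw [hx, volterraIntegral.congr_ae hf hxb.2]

theorem one_add_mul_apply_ae_eq (hT₁ : HasVolterraKernel T₁ K₁)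
    {f : Lp ℝ 2 (volume.restrict (Ioc 0 b))} {φ : ℝ → ℝ}
    (hf : ⇑(T f) =ᵐ[volume.restrict (Ioc 0 b)] φ) :
    ⇑(((1 + T₁) * T) f) =ᵐ[volume.restrict (Ioc 0 b)] φ + volterraIntegral K₁ φ := by
  rw [mul_apply_eq_comp, add_apply, one_apply_eq_self]
  filter_upwards [Lp.coeFn_add (T f) (T₁ (T f)), hf, apply_ae_eq_volterraIntegral hT₁ hf]
    with x h₁ h₂ h₃
  rw [h₁, Pi.add_apply, h₂, h₃, Pi.add_apply]

theorem sub_apply_intervalIndicator_ae_eq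
    (hVk : Continuous (Function.uncurry Vk)) (hWk : Continuous (Function.uncurry Wk))
    (hTV : HasVolterraKernel TV Vk) (hTW : HasVolterraKernel TW Wk)
    {α : ℝ} (hα : 0 ≤ α) (β : ℝ) :
    ⇑((TV - TW) (intervalIndicator b α β)) =ᵐ[volume.restrict (Ioc 0 b)]
      volterraIntegral (Vk - Wk) ((Ioc α β).indicator 1) := by
  filter_upwards [Lp.coeFn_sub (TV (intervalIndicator b α β)) (TW (intervalIndicator b α β)),
    apply_ae_eq_volterraIntegral hTV (coeFn_intervalIndicator α β),
    apply_ae_eq_volterraIntegral hTW (coeFn_intervalIndicator α β)] with x h₁ h₂ h₃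
  rw [sub_apply, h₁, Pi.sub_apply, h₂, h₃, volterraIntegral.indicator_one hα,
    volterraIntegral.indicator_one hα, volterraIntegral.indicator_one hα]
  exact (intervalIntegral.integral_sub
    ((hVk.comp (Continuous.prodMk_right x)).intervalIntegrable _ _)
    ((hWk.comp (Continuous.prodMk_right x)).intervalIntegrable _ _)).symm

theorem setIntegral_eq_zero_of_eq_neg_star
    (hVk : Continuous (Function.uncurry Vk)) (hWk : Continuous (Function.uncurry Wk))
    (hTV : HasVolterraKernel TV Vk) (hTW : HasVolterraKernel TW Wk)
    (hTV₁ : HasVolterraKernel TV₁ V₁k) (hTW₁ : HasVolterraKernel TW₁ W₁k)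
    (hstar : (1 + TW₁) * (TV - TW) = -star ((1 + TV₁) * (TV - TW)))
    {α β γ δ : ℝ} (hα : 0 ≤ α) (hαβ : α ≤ β) (hβγ : β ≤ γ) (hγδ : γ ≤ δ) (hδ : δ ≤ b) :
    ∫ x in Ioc γ δ, (volterraIntegral (Vk - Wk) ((Ioc α β).indicator 1) +
      volterraIntegral W₁k (volterraIntegral (Vk - Wk) ((Ioc α β).indicator 1))) x = 0 := by
  have hγ : 0 ≤ γ := hα.trans (hαβ.trans hβγ)
  have hT := one_add_mul_apply_ae_eq hTW₁ (sub_apply_intervalIndicator_ae_eq hVk hWk hTV hTW hα β)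
  have hS := one_add_mul_apply_ae_eq hTV₁ (sub_apply_intervalIndicator_ae_eq hVk hWk hTV hTW hγ δ)
  have hS_left : ∀ x ∈ Ioc α β, (volterraIntegral (Vk - Wk) ((Ioc γ δ).indicator 1) +
      volterraIntegral V₁k (volterraIntegral (Vk - Wk) ((Ioc γ δ).indicator 1))) x = 0 := by
    intro x hx
    have hxγ : x ≤ γ := hx.2.trans hβγ
    rw [Pi.add_apply, volterraIntegral.indicator_one_eq_zero_of_le hxγ,
      volterraIntegral.eq_zero_of_forall_eq_zero fun y hy =>
        volterraIntegral.indicator_one_eq_zero_of_le (hy.2.trans hxγ), add_zero]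
  calc _ = ⟪intervalIndicator b γ δ, ((1 + TW₁) * (TV - TW)) (intervalIndicator b α β)⟫ :=
        (inner_intervalIndicator hγ hδ hT).symm
    _ = -⟪intervalIndicator b α β, ((1 + TV₁) * (TV - TW)) (intervalIndicator b γ δ)⟫ := by
        rw [hstar, neg_apply, inner_neg_right,
          ContinuousLinearMap.star_eq_adjoint, ContinuousLinearMap.adjoint_inner_right,
          real_inner_comm]
    _ = 0 := by
        rw [inner_intervalIndicator hα (hβγ.trans (hγδ.trans hδ)) hS,
          setIntegral_eq_zero_of_forall_eq_zero hS_left, neg_zero]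

theorem eq_of_kernel_eqOn (hTV : HasVolterraKernel TV Vk) (hTW : HasVolterraKernel TW Wk)
    (h : ∀ x ∈ Ioo 0 b, ∀ y ∈ Icc 0 x, Vk x y = Wk x y) : TV = TW := by
  refine ContinuousLinearMap.ext fun f => Lp.ext ?_
  have hIoo : ∀ᵐ x ∂(volume.restrict (Ioc 0 b)), x ∈ Ioo 0 b := by
    rw [Measure.restrict_congr_set Ioo_ae_eq_Ioc.symm]
    exact ae_restrict_mem measurableSet_Ioo
  filter_upwards [hTV f, hTW f, hIoo] with x hV hW hx
  rw [hV, hW]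
  exact setIntegral_congr_fun measurableSet_Ioc fun y hy => by rw [h x hx y ⟨hy.1.le, hy.2⟩]

end L2

theorem stmt_8_general (b : ℝ)
    (Vk Wk V1k W1k : ℝ → ℝ → ℝ)
    (hVk : Continuous (Function.uncurry Vk)) (hWk : Continuous (Function.uncurry Wk))
    (hW1k : Continuous (Function.uncurry W1k))
    (TV TW TV1 TW1 U :
      Lp ℝ 2 (volume.restrict (Set.Ioc (0 : ℝ) b)) →L[ℝ]
        Lp ℝ 2 (volume.restrict (Set.Ioc (0 : ℝ) b)))
    (hTV : ∀ f, (TV f : ℝ → ℝ) =ᵐ[volume.restrict (Set.Ioc (0 : ℝ) b)]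
      fun x => ∫ y in Set.Ioc (0 : ℝ) x, Vk x y * f y)
    (hTW : ∀ f, (TW f : ℝ → ℝ) =ᵐ[volume.restrict (Set.Ioc (0 : ℝ) b)]
      fun x => ∫ y in Set.Ioc (0 : ℝ) x, Wk x y * f y)
    (hTV1 : ∀ f, (TV1 f : ℝ → ℝ) =ᵐ[volume.restrict (Set.Ioc (0 : ℝ) b)]
      fun x => ∫ y in Set.Ioc (0 : ℝ) x, V1k x y * f y)
    (hTW1 : ∀ f, (TW1 f : ℝ → ℝ) =ᵐ[volume.restrict (Set.Ioc (0 : ℝ) b)]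
      fun x => ∫ y in Set.Ioc (0 : ℝ) x, W1k x y * f y)
    (hVinv : (1 + TV) * (1 + TV1) = 1 ∧ (1 + TV1) * (1 + TV) = 1)
    (hWinv : (1 + TW) * (1 + TW1) = 1 ∧ (1 + TW1) * (1 + TW) = 1)
    (hU : ∀ f g, (inner ℝ (U f) (U g) : ℝ) = inner ℝ f g)
    (heq : 1 + ContinuousLinearMap.adjoint TV
      = U * (1 + ContinuousLinearMap.adjoint TW)) :
    TV = TW := by
  have hUU : star U * U = 1 := (ContinuousLinearMap.inner_map_map_iff_adjoint_comp_self U).1 hU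
  have hstar : (1 + TW1) * (TV - TW) = -star ((1 + TV1) * (TV - TW)) := by
    have h := mul_sub_eq_neg_star_mul_sub (p := 1 + TV) (q := 1 + TW)
      (by simpa [ContinuousLinearMap.star_eq_adjoint] using heq) hUU hVinv.2 hWinv.2
    rwa [add_sub_add_left_eq_sub] at h
  have hD : Continuous (Function.uncurry (Vk - Wk)) := hVk.sub hWk
  obtain ⟨C, hC⟩ := abs_intervalIntegral_le_sq_of_setIntegral_eq_zero hD hW1k
    fun α β γ δ hα hαβ hβγ hγδ hδ =>
      setIntegral_eq_zero_of_eq_neg_star hVk hWk hTV hTW hTV1 hTW1 hstar hα hαβ hβγ hγδ hδ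
  refine eq_of_kernel_eqOn hTV hTW fun x hx y hy => sub_eq_zero.1 ?_
  exact eqOn_zero_of_abs_intervalIntegral_le_sq (hD.comp (Continuous.prodMk_right x))
    hx.1 (fun s t hs hst htx => hC s t x hs hst htx hx.2) hy

/-- If `V, W` are Volterra integral operators on `L²(0,b)` with continuous kernels,
`U` is unitary, `I + V` and `I + W` have inverses `I + V₁`, `I + W₁` of Volterra type,
and `I + V* = U (I + W*)`, then `V = W`. -/
theorem stmt_8 (b : ℝ) (hb : 0 < b)
    (Vk Wk V1k W1k : ℝ → ℝ → ℝ)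
    (hVk : Continuous (Function.uncurry Vk)) (hWk : Continuous (Function.uncurry Wk))
    (hV1k : Continuous (Function.uncurry V1k)) (hW1k : Continuous (Function.uncurry W1k))
    (TV TW TV1 TW1 U :
      Lp ℝ 2 (volume.restrict (Set.Ioc (0 : ℝ) b)) →L[ℝ]
        Lp ℝ 2 (volume.restrict (Set.Ioc (0 : ℝ) b)))
    (hTV : ∀ f, (TV f : ℝ → ℝ) =ᵐ[volume.restrict (Set.Ioc (0 : ℝ) b)]
      fun x => ∫ y in Set.Ioc (0 : ℝ) x, Vk x y * f y)
    (hTW : ∀ f, (TW f : ℝ → ℝ) =ᵐ[volume.restrict (Set.Ioc (0 : ℝ) b)]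
      fun x => ∫ y in Set.Ioc (0 : ℝ) x, Wk x y * f y)
    (hTV1 : ∀ f, (TV1 f : ℝ → ℝ) =ᵐ[volume.restrict (Set.Ioc (0 : ℝ) b)]
      fun x => ∫ y in Set.Ioc (0 : ℝ) x, V1k x y * f y)
    (hTW1 : ∀ f, (TW1 f : ℝ → ℝ) =ᵐ[volume.restrict (Set.Ioc (0 : ℝ) b)]
      fun x => ∫ y in Set.Ioc (0 : ℝ) x, W1k x y * f y)
    (hVinv : (1 + TV) * (1 + TV1) = 1 ∧ (1 + TV1) * (1 + TV) = 1)
    (hWinv : (1 + TW) * (1 + TW1) = 1 ∧ (1 + TW1) * (1 + TW) = 1)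
    (hU : ∀ f g, (inner ℝ (U f) (U g) : ℝ) = inner ℝ f g) (hUsurj : Function.Surjective U)
    (heq : 1 + ContinuousLinearMap.adjoint TV
      = U * (1 + ContinuousLinearMap.adjoint TW)) :
    TV = TW :=
  stmt_8_general b Vk Wk V1k W1k hVk hWk hW1k TV TW TV1 TW1 U hTV hTW hTV1 hTW1 hVinv hWinv hU heq
end

section
/- Let $f, h : \mathbb{C} \to \mathbb{C}$ be functions analytic on the open upper half-plane $\mathbb{C}_+$, continuous up to $\mathbb{R}$, nonvanishing on $\overline{\mathbb{C}_+}$ except at the same finite set of simple zeros $\{ik_j\} \subset i(0,\infty)$, with $f(k)/h(k) \to 1$ as $|k| \to \infty$ in $\overline{\mathbb{C}_+}$. If $\frac{f(k)}{h(k)} = \frac{f(-k)}{h(-k)}$ for all $k \in \mathbb{R}$, then $f \equiv h$ on $\mathbb{C}_+$. -/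
/-!
Off the common simple zeros, `g = f / h` extends to a zero-free function on the closed upper
half-plane, holomorphic inside, tending to `1` at infinity and even on `ℝ`. The reflected function
`g♯ z = conj (g (-conj z))` is again holomorphic in the upper half-plane, and `g g♯` equals `|g|²`
on `ℝ`. The maximum principle applied to `exp (± i g g♯)` shows that `g g♯` is real, hence constant
by the open mapping theorem, so `g g♯ ≡ 1` and `|g| = 1` on `ℝ`. The maximum principle applied to
`g` and `1 / g` then gives `|g| ≡ 1`, so `g` is constant, equal to `1`.
-/

open Complex ComplexConjugate Filter Set Metric Topology Bornology

noncomputable def coboundedUpper : Filter ℂ := cobounded ℂ ⊓ 𝓟 {z : ℂ | 0 < z.im}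

instance coboundedUpper_neBot : NeBot coboundedUpper := by
  rw [coboundedUpper]
  refine inf_principal_neBot_iff.2 fun V hV => ?_
  obtain ⟨R, -, hR⟩ := hasBasis_cobounded_norm.mem_iff.1 hV
  refine ⟨((|R| + 1 : ℝ) : ℂ) * I, hR ?_, ?_⟩
  · simp only [mem_ofPred_eq, norm_mul, norm_real, Real.norm_eq_abs, norm_I, mul_one]
    rw [abs_of_pos (by positivity)]
    linarith [le_abs_self R]
  · simp only [mem_ofPred_eq, mul_im, ofReal_re, I_im, ofReal_im, I_re]
    positivity

lemma tendsto_coboundedUpper_of_forall {F : ℂ → ℂ} {c : ℂ}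
    (hF : ∀ ε > (0 : ℝ), ∃ R : ℝ, ∀ z : ℂ, 0 ≤ z.im → R ≤ ‖z‖ → ‖F z - c‖ < ε) :
    Tendsto F coboundedUpper (𝓝 c) := by
  refine Metric.tendsto_nhds.2 fun ε hε => ?_
  obtain ⟨R, hR⟩ := hF ε hε
  rw [coboundedUpper, eventually_inf_principal]
  filter_upwards [eventually_cobounded_le_norm R] with z hRz hz
  simpa [dist_eq_norm] using hR z (le_of_lt hz) hRz

def reflectImAxis (g : ℂ → ℂ) (z : ℂ) : ℂ := conj (g (-conj z))

section reflectImAxis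

variable {g : ℂ → ℂ}

lemma reflectImAxis_ofReal (x : ℝ) : reflectImAxis g x = conj (g (-x)) := by
  simp [reflectImAxis]

lemma DifferentiableOn.reflectImAxis (hg : DifferentiableOn ℂ g {z : ℂ | 0 < z.im}) :
    DifferentiableOn ℂ (reflectImAxis g) {z : ℂ | 0 < z.im} := by
  intro z hz
  have hgz : DifferentiableAt ℂ g (-conj z) :=
    hg.differentiableAt ((isOpen_lt continuous_const continuous_im).mem_nhds (by simpa using hz))
  have := (hgz.comp (conj z) (differentiableAt_id.neg)).conj_conj
  rw [conj_conj] at this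
  exact this.differentiableWithinAt

lemma ContinuousOn.reflectImAxis (hg : ContinuousOn g {z : ℂ | 0 ≤ z.im}) :
    ContinuousOn (reflectImAxis g) {z : ℂ | 0 ≤ z.im} :=
  continuous_conj.comp_continuousOn
    (hg.comp continuous_conj.neg.continuousOn fun z (hz : 0 ≤ z.im) => by simpa using hz)

lemma tendsto_reflectImAxis {c : ℂ} (hg : Tendsto g coboundedUpper (𝓝 c)) :
    Tendsto (reflectImAxis g) coboundedUpper (𝓝 (conj c)) := by
  have hτ : Tendsto (fun z : ℂ => -conj z) coboundedUpper coboundedUpper := by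
    refine tendsto_inf.2 ⟨?_, tendsto_principal.2 ?_⟩ <;> rw [coboundedUpper]
    · rw [← tendsto_norm_atTop_iff_cobounded]
      simpa using tendsto_norm_cobounded_atTop.mono_left inf_le_left
    · filter_upwards [mem_inf_of_right (mem_principal_self _)] with z hz
      simpa using hz
  exact (continuous_conj.tendsto c).comp (hg.comp hτ)

end reflectImAxis

lemma norm_le_of_forall_real_norm_le_of_tendsto {E : Type*} [NormedAddCommGroup E]
    [NormedSpace ℂ E] {F : ℂ → E} {C : ℝ} {c : E}
    (hd : DifferentiableOn ℂ F {z : ℂ | 0 < z.im}) (hc : ContinuousOn F {z : ℂ | 0 ≤ z.im})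
    (hb : ∀ x : ℝ, ‖F x‖ ≤ C) (hlim : Tendsto F coboundedUpper (𝓝 c)) (hcC : ‖c‖ ≤ C)
    {z : ℂ} (hz : 0 < z.im) : ‖F z‖ ≤ C := by
  refine le_of_forall_pos_le_add fun ε hε => ?_
  obtain ⟨R, hR⟩ : ∃ R : ℝ, ∀ w : ℂ, R ≤ ‖w‖ → 0 < w.im → ‖F w‖ ≤ C + ε := by
    have := hlim.norm.eventually (ge_mem_nhds (by linarith : ‖c‖ < C + ε))
    rw [coboundedUpper, eventually_inf_principal, hasBasis_cobounded_norm.eventually_iff] at this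
    simpa using this
  set ρ := max R (‖z‖ + 1)
  set D := {w : ℂ | 0 < w.im} ∩ ball 0 ρ
  have hDo : IsOpen D := (isOpen_lt continuous_const continuous_im).inter isOpen_ball
  have hD : closure D ⊆ {w : ℂ | 0 ≤ w.im} ∩ closedBall 0 ρ :=
    closure_minimal (inter_subset_inter (fun w (hw : 0 < w.im) => hw.le) ball_subset_closedBall)
      ((isClosed_le continuous_const continuous_im).inter isClosed_closedBall)
  have hdc : DiffContOnCl ℂ F D := ⟨hd.mono inter_subset_left, hc.mono (hD.trans inter_subset_left)⟩
  refine norm_le_of_forall_mem_frontier_norm_le (isBounded_ball.subset inter_subset_right) hdc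
    (fun w hw => ?_) (subset_closure ⟨hz, mem_ball_zero_iff.2 (by simp [ρ])⟩)
  obtain ⟨hw0, hwρ⟩ := hD hw.1
  have hwD : w ∉ D := fun h => hw.2 (hDo.interior_eq ▸ h)
  rcases (show 0 ≤ w.im from hw0).eq_or_lt with him | him
  · have hwre : ((w.re : ℝ) : ℂ) = w := Complex.ext rfl (by simp [him])
    linarith [hwre ▸ hb w.re]
  · have hρw : ρ ≤ ‖w‖ := not_lt.1 fun hlt => hwD ⟨him, mem_ball_zero_iff.2 hlt⟩
    exact hR w ((le_max_left _ _).trans hρw) him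

lemma eq_of_mapsTo_of_interior_eq_empty {F : ℂ → ℂ} {S : Set ℂ} {c : ℂ}
    (hd : DifferentiableOn ℂ F {z : ℂ | 0 < z.im}) (hS : interior S = ∅)
    (hFS : MapsTo F {z : ℂ | 0 < z.im} S) (hlim : Tendsto F coboundedUpper (𝓝 c))
    {z : ℂ} (hz : 0 < z.im) : F z = c := by
  have hU : IsOpen {z : ℂ | 0 < z.im} := isOpen_lt continuous_const continuous_im
  rcases (hd.analyticOnNhd hU).is_constant_or_isOpen
    (convex_halfSpace_im_gt 0).isPreconnected with ⟨v, hv⟩ | hopen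
  · have hFv : Tendsto F coboundedUpper (𝓝 v) :=
      tendsto_const_nhds.congr' <| eventually_of_mem (mem_inf_of_right (mem_principal_self _))
        fun w hw => (hv w hw).symm
    rw [hv z hz, tendsto_nhds_unique hFv hlim]
  · have := (hopen _ subset_rfl hU).subset_interior_iff.2 (image_subset_iff.2 hFS)
    rw [hS] at this
    exact absurd (this ⟨z, hz, rfl⟩) (notMem_empty _)

section Rigidity

variable {F : ℂ → ℂ}

lemma eq_of_forall_real_im_eq_zero (hd : DifferentiableOn ℂ F {z : ℂ | 0 < z.im})
    (hc : ContinuousOn F {z : ℂ | 0 ≤ z.im}) {c : ℝ} (hreal : ∀ x : ℝ, (F x).im = 0)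
    (hlim : Tendsto F coboundedUpper (𝓝 c)) {z : ℂ} (hz : 0 < z.im) : F z = c := by
  -- `‖exp (± I F)‖ = exp (∓ Im F)` is `1` on the real line and tends to `1` at infinity
  have hexp : ∀ σ : ℂ, σ.re = 0 → ∀ w : ℂ, 0 < w.im → ‖exp (σ * F w)‖ ≤ 1 := fun σ hσ _ =>
    norm_le_of_forall_real_norm_le_of_tendsto ((hd.const_mul σ).cexp)
      ((continuousOn_const.mul hc).cexp) (fun x => by simp [norm_exp, hσ, hreal x])
      ((continuous_exp.tendsto _).comp (hlim.const_mul σ)) (by simp [norm_exp, hσ])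
  have him : MapsTo F {w : ℂ | 0 < w.im} {v : ℂ | v.im = 0} := fun w hw => by
    have h₁ := hexp I I_re w hw
    have h₂ := hexp (-I) (by simp) w hw
    simp only [norm_exp, Real.exp_le_one_iff, mul_re, I_re, I_im, neg_re, neg_im] at h₁ h₂
    show (F w).im = 0
    linarith
  refine eq_of_mapsTo_of_interior_eq_empty hd (eq_empty_of_forall_notMem fun w hw => ?_) him hlim hz
  have h₀ : w ∈ interior {v : ℂ | 0 ≤ v.im} :=
    interior_mono (fun (v : ℂ) (hv : v.im = 0) => hv.ge) hw
  rw [interior_setOfPred_le_im] at h₀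
  exact h₀.ne' (interior_subset (s := {v : ℂ | v.im = 0}) hw)

lemma eq_of_forall_real_norm_eq_one (hd : DifferentiableOn ℂ F {z : ℂ | 0 < z.im})
    (hc : ContinuousOn F {z : ℂ | 0 ≤ z.im}) {c : ℂ} (h₀ : ∀ z : ℂ, 0 ≤ z.im → F z ≠ 0)
    (hnorm : ∀ x : ℝ, ‖F x‖ = 1) (hlim : Tendsto F coboundedUpper (𝓝 c)) (hc₁ : ‖c‖ = 1)
    {z : ℂ} (hz : 0 < z.im) : F z = c := by
  refine eq_of_mapsTo_of_interior_eq_empty hd (interior_sphere 0 one_ne_zero) (fun w hw => ?_)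
    hlim hz
  have hle := norm_le_of_forall_real_norm_le_of_tendsto hd hc (fun x => (hnorm x).le) hlim hc₁.le hw
  have hge : ‖(F w)⁻¹‖ ≤ 1 :=
    norm_le_of_forall_real_norm_le_of_tendsto (hd.inv fun v hv => h₀ v (le_of_lt hv))
      (hc.inv₀ h₀) (fun x => by simp [hnorm x])
      (hlim.inv₀ (norm_ne_zero_iff.1 (by simp [hc₁]))) (by simp [hc₁]) hw
  rw [norm_inv, inv_le_one₀ (norm_pos_iff.2 (h₀ w (le_of_lt hw)))] at hge
  exact mem_sphere_zero_iff_norm.2 (le_antisymm hle hge)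

lemma eq_one_of_even_on_real (hd : DifferentiableOn ℂ F {z : ℂ | 0 < z.im})
    (hc : ContinuousOn F {z : ℂ | 0 ≤ z.im}) (h₀ : ∀ z : ℂ, 0 ≤ z.im → F z ≠ 0)
    (heven : ∀ x : ℝ, F x = F (-x)) (hlim : Tendsto F coboundedUpper (𝓝 1))
    {z : ℂ} (hz : 0 < z.im) : F z = 1 := by
  set B := F * reflectImAxis F
  have hBc : ContinuousOn B {w : ℂ | 0 ≤ w.im} := hc.mul hc.reflectImAxis
  have hBx : ∀ x : ℝ, B x = Complex.normSq (F x) := fun x => by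
    simp only [B, Pi.mul_apply, reflectImAxis_ofReal, ← heven x, mul_conj]
  have hB₁ : EqOn B 1 {w : ℂ | 0 ≤ w.im} := by
    refine EqOn.of_subset_closure (s := {w : ℂ | 0 < w.im}) (fun w hw => ?_) hBc
      continuousOn_const (fun w (hw : 0 < w.im) => hw.le) (closure_setOfPred_lt_im 0).ge
    have hBd : DifferentiableOn ℂ B {w : ℂ | 0 < w.im} := hd.mul hd.reflectImAxis
    have hBlim : Tendsto B coboundedUpper (𝓝 ((1 : ℝ) : ℂ)) := by
      have := hlim.mul (tendsto_reflectImAxis hlim)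
      rwa [map_one, mul_one, ← ofReal_one] at this
    simpa using eq_of_forall_real_im_eq_zero hBd hBc (fun x => by rw [hBx x, ofReal_im]) hBlim hw
  have hnorm : ∀ x : ℝ, ‖F x‖ = 1 := fun x => by
    have h₁ : Complex.normSq (F x) = 1 := by
      have : B x = 1 := hB₁ (show 0 ≤ (x : ℂ).im by simp)
      exact_mod_cast hBx x ▸ this
    rwa [normSq_eq_norm_sq, pow_eq_one_iff_of_nonneg (norm_nonneg _) two_ne_zero] at h₁
  exact eq_of_forall_real_norm_eq_one hd hc h₀ hnorm hlim norm_one hz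

end Rigidity

noncomputable def removableDiv (f h : ℂ → ℂ) (Z : Finset ℂ) (z : ℂ) : ℂ :=
  if z ∈ Z then deriv f z / deriv h z else f z / h z

section removableDiv

variable {f h : ℂ → ℂ} {Z : Finset ℂ}

lemma removableDiv_of_notMem {z : ℂ} (hz : z ∉ Z) : removableDiv f h Z z = f z / h z :=
  if_neg hz

lemma removableDiv_eventuallyEq_div {z : ℂ} (hz : z ∉ Z) :
    removableDiv f h Z =ᶠ[𝓝 z] fun w => f w / h w :=
  eventually_of_mem (Z.finite_toSet.isClosed.isOpen_compl.mem_nhds hz)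
    fun _ hw => removableDiv_of_notMem hw

lemma removableDiv_eventuallyEq_div_cobounded :
    removableDiv f h Z =ᶠ[cobounded ℂ] fun w => f w / h w :=
  eventually_of_mem (isBounded_def.1 Z.finite_toSet.isBounded)
    fun _ hw => removableDiv_of_notMem hw

lemma removableDiv_eventuallyEq_dslope_div {w : ℂ} (hw : w ∈ Z) (hfw : f w = 0) (hhw : h w = 0) :
    removableDiv f h Z =ᶠ[𝓝 w] fun z => dslope f w z / dslope h w z := by
  filter_upwards [(Z.erase w).finite_toSet.isClosed.isOpen_compl.mem_nhds (by simp)] with z hz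
  rcases eq_or_ne z w with rfl | hzw
  · simp [removableDiv, hw, dslope_same]
  · have hzZ : z ∉ Z := fun hzZ => hz (Finset.mem_erase.2 ⟨hzw, hzZ⟩)
    rw [removableDiv_of_notMem hzZ, dslope_of_ne _ hzw, dslope_of_ne _ hzw, slope_def_field,
      slope_def_field, hfw, hhw, sub_zero, sub_zero,
      div_div_div_cancel_right₀ (sub_ne_zero.2 hzw)]

lemma differentiableAt_removableDiv_of_mem {s : Set ℂ} {w : ℂ} (hs : s ∈ 𝓝 w)
    (hf : DifferentiableOn ℂ f s) (hh : DifferentiableOn ℂ h s) (hw : w ∈ Z) (hfw : f w = 0)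
    (hhw : h w = 0) (hh'w : deriv h w ≠ 0) : DifferentiableAt ℂ (removableDiv f h Z) w := by
  refine DifferentiableAt.congr_of_eventuallyEq ?_ (removableDiv_eventuallyEq_dslope_div hw hfw hhw)
  exact (((differentiableOn_dslope hs).2 hf).differentiableAt hs).div
    (((differentiableOn_dslope hs).2 hh).differentiableAt hs) (by rwa [dslope_same])

lemma removableDiv_ne_zero {z : ℂ} (hf'z : z ∈ Z → deriv f z ≠ 0) (hh'z : z ∈ Z → deriv h z ≠ 0)
    (hfz : z ∉ Z → f z ≠ 0) (hhz : z ∉ Z → h z ≠ 0) : removableDiv f h Z z ≠ 0 := by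
  by_cases hzZ : z ∈ Z
  · simpa [removableDiv, hzZ] using ⟨hf'z hzZ, hh'z hzZ⟩
  · rw [removableDiv_of_notMem hzZ]
    exact div_ne_zero (hfz hzZ) (hhz hzZ)

variable {s : Set ℂ}

lemma differentiableOn_removableDiv (hs : IsOpen s) (hf : DifferentiableOn ℂ f s)
    (hh : DifferentiableOn ℂ h s) (hfZ : ∀ w ∈ Z, f w = 0) (hhZ : ∀ w ∈ Z, h w = 0)
    (hh'Z : ∀ w ∈ Z, deriv h w ≠ 0) (hh₀ : ∀ z ∈ s, z ∉ Z → h z ≠ 0) :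
    DifferentiableOn ℂ (removableDiv f h Z) s := by
  intro z hz
  refine DifferentiableAt.differentiableWithinAt ?_
  by_cases hzZ : z ∈ Z
  · exact differentiableAt_removableDiv_of_mem (hs.mem_nhds hz) hf hh hzZ (hfZ z hzZ)
      (hhZ z hzZ) (hh'Z z hzZ)
  · exact ((hf.differentiableAt (hs.mem_nhds hz)).div (hh.differentiableAt (hs.mem_nhds hz))
      (hh₀ z hz hzZ)).congr_of_eventuallyEq (removableDiv_eventuallyEq_div hzZ)

lemma continuousOn_removableDiv {t : Set ℂ} (hs : IsOpen s) (hf : DifferentiableOn ℂ f s)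
    (hh : DifferentiableOn ℂ h s) (hfZ : ∀ w ∈ Z, f w = 0) (hhZ : ∀ w ∈ Z, h w = 0)
    (hh'Z : ∀ w ∈ Z, deriv h w ≠ 0) (hZs : ∀ w ∈ Z, w ∈ s) (hfc : ContinuousOn f t)
    (hhc : ContinuousOn h t) (hh₀ : ∀ z ∈ t, z ∉ Z → h z ≠ 0) :
    ContinuousOn (removableDiv f h Z) t := by
  intro z hz
  by_cases hzZ : z ∈ Z
  · exact (differentiableAt_removableDiv_of_mem (hs.mem_nhds (hZs z hzZ)) hf hh hzZ (hfZ z hzZ)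
      (hhZ z hzZ) (hh'Z z hzZ)).continuousAt.continuousWithinAt
  · exact ((hfc z hz).div (hhc z hz) (hh₀ z hz hzZ)).congr_of_eventuallyEq
      (nhdsWithin_le_nhds (removableDiv_eventuallyEq_div hzZ)) (removableDiv_of_notMem hzZ)

end removableDiv

/-- If `f, h` are analytic in the open upper half-plane, continuous up to `ℝ`,
vanish exactly on the same finite set of simple zeros on the positive imaginary
axis, `f/h → 1` at infinity in the closed upper half-plane, and
`f(k)/h(k) = f(-k)/h(-k)` for all real `k`, then `f ≡ h` on the upper half-plane. -/
theorem stmt_13 (f h : ℂ → ℂ) (Z : Finset ℂ)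
    (hZ : ∀ z ∈ Z, z.re = 0 ∧ 0 < z.im)
    (hf : DifferentiableOn ℂ f {z : ℂ | 0 < z.im})
    (hh : DifferentiableOn ℂ h {z : ℂ | 0 < z.im})
    (hfc : ContinuousOn f {z : ℂ | 0 ≤ z.im})
    (hhc : ContinuousOn h {z : ℂ | 0 ≤ z.im})
    (hfz : ∀ z : ℂ, 0 ≤ z.im → (f z = 0 ↔ z ∈ Z))
    (hhz : ∀ z : ℂ, 0 ≤ z.im → (h z = 0 ↔ z ∈ Z))
    (hfs : ∀ z ∈ Z, deriv f z ≠ 0) (hhs : ∀ z ∈ Z, deriv h z ≠ 0)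
    (hlim : ∀ ε > (0 : ℝ), ∃ R : ℝ, ∀ z : ℂ, 0 ≤ z.im → R ≤ ‖z‖ →
      ‖f z / h z - 1‖ < ε)
    (hrefl : ∀ x : ℝ, f x / h x = f (-x) / h (-x)) :
    ∀ z : ℂ, 0 < z.im → f z = h z := by
  have hU : IsOpen {z : ℂ | 0 < z.im} := isOpen_lt continuous_const continuous_im
  have hfZ : ∀ w ∈ Z, f w = 0 := fun w hw => (hfz w (hZ w hw).2.le).2 hw
  have hhZ : ∀ w ∈ Z, h w = 0 := fun w hw => (hhz w (hZ w hw).2.le).2 hw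
  have hh₀ : ∀ z : ℂ, 0 ≤ z.im → z ∉ Z → h z ≠ 0 := fun z hz => mt (hhz z hz).1
  have hℝ : ∀ x : ℝ, (x : ℂ) ∉ Z := fun x hx => by simpa using (hZ _ hx).2
  have hg₁ : ∀ z : ℂ, 0 < z.im → removableDiv f h Z z = 1 := fun _ => eq_one_of_even_on_real
    (differentiableOn_removableDiv hU hf hh hfZ hhZ hhs fun z hz => hh₀ z (le_of_lt hz))
    (continuousOn_removableDiv hU hf hh hfZ hhZ hhs (fun w hw => (hZ w hw).2) hfc hhc hh₀)
    (fun z hz => removableDiv_ne_zero (hfs z) (hhs z) (mt (hfz z hz).1) (hh₀ z hz))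
    (fun x => by
      rw [removableDiv_of_notMem (hℝ x), ← ofReal_neg, removableDiv_of_notMem (hℝ (-x)),
        ofReal_neg, hrefl])
    ((tendsto_coboundedUpper_of_forall hlim).congr'
      (removableDiv_eventuallyEq_div_cobounded.filter_mono inf_le_left).symm)
  intro z hz
  by_cases hzZ : z ∈ Z
  · rw [hfZ z hzZ, hhZ z hzZ]
  · have := hg₁ z hz
    rwa [removableDiv_of_notMem hzZ, div_eq_one_iff_eq (hh₀ z hz.le hzZ)] at this
end

section
/- Suppose $A \in L^1(\mathbb{R}_+)$ and $f(k) := 1 + \int_0^{\infty} A(y)e^{iky}\,dy$ for $k$ in the closed upper half-plane, and suppose $f(ik_j) = 0$ for some $k_j > 0$. Then for real $k$, $\frac{f(k)}{k - ik_j} = \int_0^{\infty} h_j(s)e^{iks}\,ds$ where $h_j(s) := i\int_0^{\infty} A(t+s)e^{-k_j t}\,dt$, and $h_j \in L^1(\mathbb{R}_+)$. -/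
/-! With `κ = k_j` and `F(k) = ∫₀^∞ A(y) e^{iky} dy`, the substitution `y = t + s` gives
`h(s) = i ∫_s^∞ A(y) e^{-κ(y-s)} dy`. Integrating `1_{s<y} A(y) e^{-κ(y-s)} e^{iks}` over
`(0,∞)²` in both orders (Fubini: its absolute integral is at most `‖A‖₁ / κ`, which also
gives `h ∈ L¹`), the inner `s`-integral is `A(y) (e^{iky} - e^{-κy}) / (κ + ik)`, so
`∫₀^∞ h(s) e^{iks} ds = i (F(k) - F(iκ)) / (κ + ik) = (F(k) - F(iκ)) / (k - iκ)`,
and `F(iκ) = -1` turns the numerator into `f(k)`. -/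

open MeasureTheory Set Complex

section

variable {g : ℝ → ℂ} {κ : ℝ} {k : ℂ}

noncomputable def fourierIoi (g : ℝ → ℂ) (k : ℂ) : ℂ :=
  ∫ y in Ioi 0, g y * exp (I * k * y)

noncomputable def expTail (g : ℝ → ℂ) (κ : ℝ) (s : ℝ) : ℂ :=
  ∫ t in Ioi 0, g (t + s) * exp (-κ * t)

noncomputable def expTailKernel (g : ℝ → ℂ) (κ : ℝ) (k : ℂ) : ℝ × ℝ → ℂ :=
  {p | p.1 < p.2}.indicator fun p => g p.2 * exp (-κ * (p.2 - p.1)) * exp (I * k * p.1)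

lemma norm_exp_I_mul_le_one (hk : 0 ≤ k.im) {s : ℝ} (hs : 0 ≤ s) :
    ‖exp (I * k * s)‖ ≤ 1 := by
  rw [norm_exp, Real.exp_le_one_iff]
  simpa [mul_re] using mul_nonneg hk hs

lemma integrableOn_mul_exp_I_mul (hg : IntegrableOn g (Ioi 0)) (hk : 0 ≤ k.im) :
    IntegrableOn (fun y : ℝ => g y * exp (I * k * y)) (Ioi 0) :=
  hg.mul_bdd (by fun_prop) <| (ae_restrict_mem measurableSet_Ioi).mono
    fun _ hy => norm_exp_I_mul_le_one hk (le_of_lt hy)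

lemma expTail_eq_integral_Ioi (g : ℝ → ℂ) (κ s : ℝ) :
    expTail g κ s = ∫ y in Ioi s, g y * exp (-κ * (y - s)) := by
  have := (measurePreserving_add_right volume s).setIntegral_preimage_emb
    (measurableEmbedding_addRight s) (fun y => g y * exp (-κ * (y - s))) (Ioi s)
  simpa [expTail, preimage_add_const_Ioi] using this

lemma integral_Ioo_exp_neg_mul_sub_le (hκ : 0 < κ) (y : ℝ) :
    ∫ s in Ioo 0 y, Real.exp (-κ * (y - s)) ≤ κ⁻¹ := by
  have hsplit : ∀ s, Real.exp (-κ * (y - s)) = Real.exp (κ * s) * Real.exp (-κ * y) := by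
    intro s; rw [← Real.exp_add]; ring_nf
  simp_rw [hsplit]
  calc ∫ s in Ioo 0 y, Real.exp (κ * s) * Real.exp (-κ * y)
      ≤ ∫ s in Iic y, Real.exp (κ * s) * Real.exp (-κ * y) :=
        setIntegral_mono_set ((integrableOn_exp_mul_Iic hκ y).mul_const _)
          (Filter.Eventually.of_forall fun _ => by positivity)
          (Ioo_subset_Iio_self.trans Iio_subset_Iic_self).eventuallyLE
    _ = κ⁻¹ := by
        rw [integral_mul_const, integral_exp_mul_Iic hκ, div_mul_eq_mul_div, ← Real.exp_add]
        simp

lemma expTailKernel_apply_eq_indicator_Iio (g : ℝ → ℂ) (κ : ℝ) (k : ℂ) (s y : ℝ) :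
    expTailKernel g κ k (s, y)
      = (Iio y).indicator (fun s => g y * exp (-κ * (y - s)) * exp (I * k * s)) s := by
  simp [expTailKernel, indicator_apply]

lemma expTailKernel_apply_eq_indicator_Ioi (g : ℝ → ℂ) (κ : ℝ) (k : ℂ) (s y : ℝ) :
    expTailKernel g κ k (s, y)
      = (Ioi s).indicator (fun y => g y * exp (-κ * (y - s)) * exp (I * k * s)) y := by
  simp [expTailKernel, indicator_apply]

lemma setIntegral_expTailKernel_prodMk_left (g : ℝ → ℂ) (κ : ℝ) (k : ℂ) {s : ℝ}
    (hs : 0 ≤ s) :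
    ∫ y in Ioi 0, expTailKernel g κ k (s, y) = expTail g κ s * exp (I * k * s) := by
  simp_rw [expTailKernel_apply_eq_indicator_Ioi]
  rw [integral_indicator measurableSet_Ioi,
    Measure.restrict_restrict measurableSet_Ioi, Ioi_inter_Ioi, sup_eq_left.mpr hs,
    integral_mul_const, expTail_eq_integral_Ioi]

lemma integral_Ioo_exp_mul_complex {c : ℂ} (hc : c ≠ 0) {y : ℝ} (hy : 0 ≤ y) :
    ∫ s in Ioo 0 y, exp (c * s) = (exp (c * y) - 1) / c := by
  rw [← integral_Ioc_eq_integral_Ioo, ← intervalIntegral.integral_of_le hy,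
    integral_exp_mul_complex hc]
  simp

lemma setIntegral_expTailKernel_prodMk_right (g : ℝ → ℂ) (hkκ : k ≠ I * κ) {y : ℝ}
    (hy : 0 ≤ y) :
    ∫ s in Ioi 0, expTailKernel g κ k (s, y)
      = (g y * exp (I * k * y) - g y * exp (I * (I * κ) * y)) / (κ + I * k) := by
  have hc : (κ : ℂ) + I * k ≠ 0 := by
    contrapose! hkκ
    linear_combination -I * hkκ + k * I_sq
  have hsplit : ∀ s : ℝ, g y * exp (-κ * (y - s)) * exp (I * k * s)
      = g y * exp (I * (I * κ) * y) * exp ((κ + I * k) * s) := by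
    intro s
    rw [mul_assoc (g y), mul_assoc (g y), ← exp_add, ← exp_add]
    congr 2
    linear_combination (-(κ : ℂ) * y) * I_sq
  simp_rw [expTailKernel_apply_eq_indicator_Iio]
  rw [integral_indicator measurableSet_Iio,
    Measure.restrict_restrict measurableSet_Iio, Iio_inter_Ioi]
  simp_rw [hsplit]
  rw [integral_const_mul, integral_Ioo_exp_mul_complex hc hy, mul_div_assoc', mul_sub, mul_one,
    mul_assoc, ← exp_add]
  congr 4
  linear_combination (κ * y : ℂ) * I_sq

lemma aestronglyMeasurable_expTailKernel (hg : AEStronglyMeasurable g (volume.restrict (Ioi 0)))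
    (κ : ℝ) (k : ℂ) :
    AEStronglyMeasurable (expTailKernel g κ k)
      ((volume.restrict (Ioi 0)).prod (volume.restrict (Ioi 0))) :=
  ((hg.comp_snd.mul (by fun_prop)).mul (by fun_prop)).indicator
    (measurableSet_lt measurable_fst measurable_snd)

lemma norm_mul_exp_mul_exp_I_mul_le (hk : 0 ≤ k.im) {s : ℝ} (hs : 0 ≤ s) (y : ℝ) :
    ‖g y * exp (-κ * (y - s)) * exp (I * k * s)‖ ≤ ‖g y‖ * Real.exp (-κ * (y - s)) := by
  rw [norm_mul, norm_mul, norm_exp]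
  refine mul_le_of_le_one_right (by positivity) (norm_exp_I_mul_le_one hk hs) |>.trans_eq ?_
  simp

lemma integrable_expTailKernel (hg : IntegrableOn g (Ioi 0)) (hκ : 0 < κ) (hk : 0 ≤ k.im) :
    Integrable (expTailKernel g κ k)
      ((volume.restrict (Ioi 0)).prod (volume.restrict (Ioi 0))) := by
  have hmeas := aestronglyMeasurable_expTailKernel hg.aestronglyMeasurable κ k
  rw [integrable_prod_iff' hmeas]
  refine ⟨Filter.Eventually.of_forall fun y => ?_, ?_⟩
  · simp_rw [expTailKernel_apply_eq_indicator_Iio]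
    rw [integrable_indicator_iff measurableSet_Iio, IntegrableOn,
      Measure.restrict_restrict measurableSet_Iio, Iio_inter_Ioi]
    exact (Continuous.integrableOn_Icc (by fun_prop)).mono_set Ioo_subset_Icc_self
  refine (hg.norm.mul_const κ⁻¹).mono' hmeas.norm.prod_swap.integral_prod_right' ?_
  filter_upwards [ae_restrict_mem measurableSet_Ioi] with y hy
  rw [Real.norm_of_nonneg (integral_nonneg fun _ => norm_nonneg _)]
  simp_rw [expTailKernel_apply_eq_indicator_Iio, norm_indicator_eq_indicator_norm]
  rw [integral_indicator measurableSet_Iio, Measure.restrict_restrict measurableSet_Iio,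
    Iio_inter_Ioi]
  calc ∫ s in Ioo 0 y, ‖g y * exp (-κ * (y - s)) * exp (I * k * s)‖
      ≤ ∫ s in Ioo 0 y, ‖g y‖ * Real.exp (-κ * (y - s)) :=
        setIntegral_mono_on ((Continuous.integrableOn_Icc (by fun_prop)).mono_set
          Ioo_subset_Icc_self) ((Continuous.integrableOn_Icc (by fun_prop)).mono_set
          Ioo_subset_Icc_self) measurableSet_Ioo
          fun s hs => norm_mul_exp_mul_exp_I_mul_le hk hs.1.le y
    _ = ‖g y‖ * ∫ s in Ioo 0 y, Real.exp (-κ * (y - s)) := integral_const_mul _ _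
    _ ≤ ‖g y‖ * κ⁻¹ :=
        mul_le_mul_of_nonneg_left (integral_Ioo_exp_neg_mul_sub_le hκ y) (norm_nonneg _)

lemma integrableOn_expTail (hg : IntegrableOn g (Ioi 0)) (hκ : 0 < κ) :
    IntegrableOn (expTail g κ) (Ioi 0) := by
  refine (integrable_expTailKernel hg hκ (k := 0) le_rfl).integral_prod_left.congr ?_
  filter_upwards [ae_restrict_mem measurableSet_Ioi] with s hs
  simp [setIntegral_expTailKernel_prodMk_left g κ 0 (le_of_lt hs)]

theorem integral_I_mul_expTail_mul_exp (hg : IntegrableOn g (Ioi 0)) (hκ : 0 < κ)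
    (hk : 0 ≤ k.im) (hkκ : k ≠ I * κ) :
    ∫ s in Ioi 0, I * expTail g κ s * exp (I * k * s)
      = (fourierIoi g k - fourierIoi g (I * κ)) / (k - I * κ) := by
  have hκk : (κ : ℂ) + I * k = I * (k - I * κ) := by linear_combination (κ : ℂ) * I_sq
  calc ∫ s in Ioi 0, I * expTail g κ s * exp (I * k * s)
      = I * ∫ s in Ioi 0, ∫ y in Ioi 0, expTailKernel g κ k (s, y) := by
        rw [← integral_const_mul]
        refine setIntegral_congr_fun measurableSet_Ioi fun s hs => ?_
        rw [setIntegral_expTailKernel_prodMk_left g κ k (le_of_lt hs), mul_assoc]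
    _ = I * ∫ y in Ioi 0, ∫ s in Ioi 0, expTailKernel g κ k (s, y) := by
        rw [integral_integral_swap (f := fun s y => expTailKernel g κ k (s, y))
          (integrable_expTailKernel hg hκ hk)]
    _ = I * ∫ y in Ioi 0,
          (g y * exp (I * k * y) - g y * exp (I * (I * κ) * y)) / (κ + I * k) := by
        congr 1
        exact setIntegral_congr_fun measurableSet_Ioi fun y hy =>
          setIntegral_expTailKernel_prodMk_right g hkκ (le_of_lt hy)
    _ = I * ((fourierIoi g k - fourierIoi g (I * κ)) / (κ + I * k)) := by
        rw [integral_div, integral_sub (integrableOn_mul_exp_I_mul hg hk)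
          (integrableOn_mul_exp_I_mul hg (by simpa using hκ.le))]
        rfl
    _ = (fourierIoi g k - fourierIoi g (I * κ)) / (k - I * κ) := by
        rw [hκk, mul_div_assoc', mul_div_mul_left _ _ I_ne_zero]

end

/-- Division of a half-plane Fourier transform by a vanishing linear factor:
if `f(k) = 1 + ∫_0^∞ A(y)e^{iky} dy` with `A ∈ L¹(ℝ₊)` and `f(ik_j) = 0`,
then for real `k`, `f(k)/(k - ik_j) = ∫_0^∞ h_j(s) e^{iks} ds` with
`h_j(s) = i ∫_0^∞ A(t+s) e^{-k_j t} dt`, and `h_j ∈ L¹(ℝ₊)`. -/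
theorem stmt_16 (A : ℝ → ℝ) (hA : IntegrableOn A (Set.Ioi 0))
    (kj : ℝ) (hkj : 0 < kj)
    (hzero : 1 + (∫ y in Set.Ioi (0 : ℝ),
      (A y : ℂ) * Complex.exp (Complex.I * (Complex.I * kj) * y)) = 0) :
    IntegrableOn
      (fun s : ℝ => Complex.I * ∫ t in Set.Ioi (0 : ℝ),
        (A (t + s) : ℂ) * Complex.exp (-(kj : ℂ) * t))
      (Set.Ioi 0) ∧
    ∀ k : ℝ,
      (1 + ∫ y in Set.Ioi (0 : ℝ), (A y : ℂ) * Complex.exp (Complex.I * k * y))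
          / ((k : ℂ) - Complex.I * kj)
        = ∫ s in Set.Ioi (0 : ℝ),
            (Complex.I * ∫ t in Set.Ioi (0 : ℝ),
              (A (t + s) : ℂ) * Complex.exp (-(kj : ℂ) * t))
              * Complex.exp (Complex.I * k * s) := by
  have hA' : IntegrableOn (fun y => (A y : ℂ)) (Ioi 0) := hA.ofReal
  refine ⟨(integrableOn_expTail hA' hkj).const_mul I, fun k => ?_⟩
  have hkkj : (k : ℂ) ≠ I * kj := fun h => hkj.ne (by simpa using congrArg im h)
  refine Eq.trans ?_ (integral_I_mul_expTail_mul_exp hA' hkj (by simp) hkkj).symm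
  congr 1
  unfold fourierIoi
  linear_combination hzero
end
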